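/- arXiv:0903.3693 — 4 statements merged into one kernel-verified Lean document; each statement's English description precedes it below -/
import Mathlib

section
/- Let k be a field of characteristic zero, and consider the polynomial ring k[x₁,…,xₘ,y₁,…,yₘ,t] modulo the ideal generated by (xᵢyᵢ − t), i = 1,…,m. Every polynomial invariant under the diagonal permutation action of the symmetric group Sₘ (permuting the xᵢ and yᵢ simultaneously) is a polynomial in t and the elementary symmetric functions σˣ₁,…,σˣₘ of the x's and σʸ₁,…,σʸₘ of the y's. -/
/-!
Averaging over `Sₘ` (possible in characteristic zero) reduces the claim to the symmetrizations
of the monomials `t ^ e * ∏ xᵢ ^ aᵢ * yᵢ ^ bᵢ`. As for multisymmetric functions, the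
symmetrization of `∏ xᵢ ^ aᵢ * yᵢ ^ bᵢ` is a polynomial in the polarized power sums
`p (a, b) = ∑ xᵢ ^ a * yᵢ ^ b`: multiplying `p (a, b)` by the symmetrization of a monomial with
one block fewer gives the wanted symmetrization, with a nonzero integer coefficient, plus
symmetrizations of monomials with one block fewer. Modulo `xᵢ * yᵢ = t` one has
`p (a, b) = t ^ b * ∑ xᵢ ^ (a - b)` for `b ≤ a` (and symmetrically for `a ≤ b`), and a power sum
in the `x`'s alone, or the `y`'s alone, is a polynomial in their elementary symmetric functions.
-/

open MvPolynomial Finset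

lemma pow_mul_pow_eq_of_mul_eq {M : Type*} [CommMonoid M] {u w t : M} (h : u * w = t) {a b : ℕ}
    (hba : b ≤ a) : u ^ a * w ^ b = t ^ b * u ^ (a - b) := by
  obtain ⟨d, rfl⟩ := Nat.exists_eq_add_of_le hba
  rw [← h, Nat.add_sub_cancel_left, pow_add, mul_pow]
  exact mul_right_comm _ _ _

theorem MvPolynomial.IsSymmetric.rename_mem_adjoin_rename_esymm {R σ : Type*} [CommRing R]
    {m : ℕ} {P : MvPolynomial (Fin m) R} (hP : P.IsSymmetric) (ι : Fin m → σ) :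
    rename ι P ∈
      Algebra.adjoin R (Set.range fun j : Fin (m + 1) => rename ι (esymm (Fin m) R j)) := by
  obtain ⟨q, hq⟩ := esymmAlgHom_surjective R (n := m) (by simp) ⟨P, hP⟩
  rw [show P = aeval (fun i : Fin m => esymm (Fin m) R (i + 1)) q by rw [← esymmAlgHom_apply, hq],
    comp_aeval_apply]
  have hq : aeval (fun i : Fin m => rename ι (esymm (Fin m) R (i + 1))) q ∈
      Algebra.adjoin R (Set.range fun i : Fin m => rename ι (esymm (Fin m) R (i + 1))) := by
    rw [Algebra.adjoin_range_eq_range_aeval]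
    exact ⟨q, rfl⟩
  refine Algebra.adjoin_mono ?_ hq
  rintro _ ⟨i, rfl⟩
  exact ⟨i.succ, by simp⟩

lemma MvPolynomial.map_sum_X_pow_mul_X_pow {k Q σ n : Type*} [CommRing k] [CommRing Q]
    [Algebra k Q] [Fintype n] (π : MvPolynomial σ k →ₐ[k] Q) {u w : n → σ}
    {t : MvPolynomial σ k} (h : ∀ i, π (X (u i)) * π (X (w i)) = π t) {a b : ℕ} (hba : b ≤ a) :
    π (∑ i, X (u i) ^ a * X (w i) ^ b) = π (t ^ b * rename u (psum n k (a - b))) := by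
  simp [psum, mul_sum, pow_mul_pow_eq_of_mul_eq (h _) hba]

namespace NodalSymmetricProduct

/-- `Sum.inl (Sum.inl i)` is `xᵢ`, `Sum.inl (Sum.inr i)` is `yᵢ` and `Sum.inr ()` is `t`. -/
abbrev Var (n : Type*) := (n ⊕ n) ⊕ Unit

variable {k n : Type*}

section CommSemiring

variable [CommSemiring k]

noncomputable def pairMonomial (c : ℕ × ℕ) (i : n) : MvPolynomial (Var n) k :=
  X (Sum.inl (Sum.inl i)) ^ c.1 * X (Sum.inl (Sum.inr i)) ^ c.2

noncomputable def diagPerm (g : Equiv.Perm n) :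
    MvPolynomial (Var n) k →ₐ[k] MvPolynomial (Var n) k :=
  rename (Sum.map (Sum.map g g) id)

lemma pairMonomial_zero (i : n) : (pairMonomial 0 i : MvPolynomial (Var n) k) = 1 := by
  simp [pairMonomial]

lemma pairMonomial_add (c d : ℕ × ℕ) (i : n) :
    (pairMonomial (c + d) i : MvPolynomial (Var n) k) = pairMonomial c i * pairMonomial d i := by
  simp only [pairMonomial, Prod.fst_add, Prod.snd_add, pow_add]
  ring

lemma diagPerm_pairMonomial (g : Equiv.Perm n) (c : ℕ × ℕ) (i : n) :
    diagPerm g (pairMonomial c i : MvPolynomial (Var n) k) = pairMonomial c (g i) := by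
  simp [pairMonomial, diagPerm]

variable [Fintype n]

noncomputable def diagMonomial (v : n → ℕ × ℕ) : MvPolynomial (Var n) k :=
  ∏ i, pairMonomial (v i) i

noncomputable def polarizedPsum (c : ℕ × ℕ) : MvPolynomial (Var n) k := ∑ i, pairMonomial c i

lemma monomial_one_eq_X_pow_mul_diagMonomial (d : Var n →₀ ℕ) :
    (monomial d 1 : MvPolynomial (Var n) k) =
      X (Sum.inr ()) ^ d (Sum.inr ()) *
        diagMonomial fun i => (d (Sum.inl (Sum.inl i)), d (Sum.inl (Sum.inr i))) := by
  rw [monomial_eq, C_1, one_mul, Finsupp.prod_fintype _ _ fun _ => pow_zero _]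
  simp only [Fintype.prod_sum_type, Fintype.prod_unique, diagMonomial, pairMonomial,
    prod_mul_distrib, PUnit.default_eq_unit]
  ring

variable [DecidableEq n]

noncomputable def symmetrize : MvPolynomial (Var n) k →ₗ[k] MvPolynomial (Var n) k :=
  ∑ g : Equiv.Perm n, (diagPerm g).toLinearMap

lemma symmetrize_apply (f : MvPolynomial (Var n) k) :
    symmetrize f = ∑ g : Equiv.Perm n, diagPerm g f := by
  simp [symmetrize]

lemma map_symmetrize_of_forall_map_diagPerm_eq {Q : Type*} [Semiring Q] [Algebra k Q]
    (π : MvPolynomial (Var n) k →ₐ[k] Q) {f : MvPolynomial (Var n) k}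
    (h : ∀ g, π (diagPerm g f) = π f) :
    π (symmetrize f) = Fintype.card (Equiv.Perm n) • π f := by
  simp [symmetrize_apply, h]

lemma symmetrize_X_pow_mul (e : ℕ) (f : MvPolynomial (Var n) k) :
    symmetrize (X (Sum.inr ()) ^ e * f) = X (Sum.inr ()) ^ e * symmetrize f := by
  simp [symmetrize_apply, mul_sum, diagPerm]

lemma symmetrize_diagMonomial (v : n → ℕ × ℕ) :
    symmetrize (diagMonomial v : MvPolynomial (Var n) k) =
      ∑ g : Equiv.Perm n, ∏ i, pairMonomial (v i) (g i) := by
  simp only [symmetrize_apply, diagMonomial, map_prod, diagPerm_pairMonomial]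

lemma symmetrize_diagMonomial_comp (v : n → ℕ × ℕ) (σ : Equiv.Perm n) :
    symmetrize (diagMonomial (v ∘ σ) : MvPolynomial (Var n) k) =
      symmetrize (diagMonomial v) := by
  rw [symmetrize_diagMonomial, symmetrize_diagMonomial, ← Equiv.sum_comp (Equiv.mulRight σ)]
  exact sum_congr rfl fun g _ => Equiv.prod_comp σ fun j => pairMonomial (v j) (g j)

lemma pairMonomial_mul_prod (c : ℕ × ℕ) (w : n → ℕ × ℕ) (g : Equiv.Perm n) (i : n) :
    (pairMonomial c (g i) : MvPolynomial (Var n) k) * ∏ j, pairMonomial (w j) (g j) =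
      ∏ j, pairMonomial (Function.update w i (w i + c) j) (g j) := by
  simp_rw [Function.apply_update (fun j a => (pairMonomial a (g j) : MvPolynomial (Var n) k)),
    prod_update_of_mem (mem_univ i), sdiff_singleton_eq_erase,
    ← mul_prod_erase univ _ (mem_univ i), pairMonomial_add]
  ring

lemma polarizedPsum_mul_symmetrize (c : ℕ × ℕ) (w : n → ℕ × ℕ) :
    polarizedPsum c * symmetrize (diagMonomial w : MvPolynomial (Var n) k) =
      ∑ i, symmetrize (diagMonomial (Function.update w i (w i + c))) := by
  simp only [symmetrize_diagMonomial, polarizedPsum, mul_sum, sum_mul]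
  refine Eq.trans ?_ sum_comm
  refine sum_congr rfl fun g _ => ?_
  rw [← Equiv.sum_comp g]
  exact sum_congr rfl fun i _ => pairMonomial_mul_prod c w g i

end CommSemiring

section Field

variable [Field k] [CharZero k] [Fintype n] [DecidableEq n]

lemma symmetrize_diagMonomial_mem_adjoin_of_forall_notMem (s : Finset n) :
    ∀ v : n → ℕ × ℕ, (∀ i ∉ s, v i = 0) →
      symmetrize (diagMonomial v : MvPolynomial (Var n) k) ∈
        Algebra.adjoin k (Set.range polarizedPsum) := by
  induction s using Finset.induction_on with
  | empty =>
    intro v hv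
    obtain rfl : v = 0 := funext fun i => hv i (notMem_empty i)
    simp only [symmetrize_diagMonomial, Pi.zero_apply, pairMonomial_zero, prod_const_one,
      sum_const]
    exact nsmul_mem (one_mem _) _
  | insert i₀ s hi₀ ih =>
    intro v hv
    set w := Function.update v i₀ 0
    have hw : ∀ i ∉ s, w i = 0 := by
      intro i hi
      by_cases h : i = i₀
      · simp [w, h]
      · simp [w, h, hv i (by simp [h, hi])]
    -- Putting the block `v i₀` on an index where `w` vanishes gives `v` up to a transposition.
    have hswap : ∀ i ∉ s, Function.update w i (w i + v i₀) = v ∘ Equiv.swap i₀ i := by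
      intro i hi
      rw [hw i hi, zero_add]
      funext j
      rcases eq_or_ne j i with rfl | hji
      · simp
      rw [Function.update_of_ne hji]
      rcases eq_or_ne j i₀ with rfl | hj₀
      · simp [w, hv i (by simp [hji.symm, hi])]
      · simp [w, hj₀, Equiv.swap_apply_of_ne_of_ne hj₀ hji]
    have hkey : (#sᶜ : k) • symmetrize (diagMonomial v : MvPolynomial (Var n) k) =
        polarizedPsum (v i₀) * symmetrize (diagMonomial w) -
          ∑ i ∈ s, symmetrize (diagMonomial (Function.update w i (w i + v i₀))) := by
      rw [polarizedPsum_mul_symmetrize, ← sum_add_sum_compl s, add_sub_cancel_left,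
        sum_congr rfl fun i hi => by rw [hswap i (mem_compl.1 hi), symmetrize_diagMonomial_comp],
        sum_const, Nat.cast_smul_eq_nsmul]
    have hcard : (#sᶜ : k) ≠ 0 := Nat.cast_ne_zero.2 (card_ne_zero_of_mem (mem_compl.2 hi₀))
    rw [← inv_smul_smul₀ hcard (symmetrize _), hkey]
    refine Subalgebra.smul_mem _ (sub_mem (mul_mem (Algebra.subset_adjoin (Set.mem_range_self _))
      (ih w hw)) (sum_mem fun i hi => ih _ fun j hj => ?_)) _
    rw [Function.update_of_ne (hi.ne_of_notMem hj).symm]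
    exact hw j hj

theorem symmetrize_diagMonomial_mem_adjoin (v : n → ℕ × ℕ) :
    symmetrize (diagMonomial v : MvPolynomial (Var n) k) ∈
      Algebra.adjoin k (Set.range polarizedPsum) :=
  symmetrize_diagMonomial_mem_adjoin_of_forall_notMem univ v fun i hi => absurd (mem_univ i) hi

theorem symmetrize_mem_adjoin (f : MvPolynomial (Var n) k) :
    symmetrize f ∈ Algebra.adjoin k (insert (X (Sum.inr ())) (Set.range polarizedPsum)) := by
  induction f using MvPolynomial.induction_on' with
  | monomial d a =>
    rw [← mul_one a, ← smul_eq_mul, ← smul_monomial, map_smul,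
      monomial_one_eq_X_pow_mul_diagMonomial, symmetrize_X_pow_mul]
    exact Subalgebra.smul_mem _ (mul_mem (pow_mem (Algebra.subset_adjoin (Set.mem_insert _ _)) _)
      (Algebra.adjoin_mono (Set.subset_insert _ _) (symmetrize_diagMonomial_mem_adjoin _))) _
  | add p q hp hq =>
    rw [map_add]
    exact add_mem hp hq

end Field

section Quotient

variable [Field k] {m : ℕ}

variable (m k) in
def nodalGenerators : Set (MvPolynomial (Var (Fin m)) k) :=
  ({X (Sum.inr ())} ∪
    (Set.range fun j : Fin (m + 1) => rename (Sum.inl ∘ Sum.inl) (esymm (Fin m) k (j : ℕ)))) ∪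
    (Set.range fun j : Fin (m + 1) => rename (Sum.inl ∘ Sum.inr) (esymm (Fin m) k (j : ℕ)))

variable {Q : Type*} [CommRing Q] [Algebra k Q] (π : MvPolynomial (Var (Fin m)) k →ₐ[k] Q)
  (hπ : ∀ i, π (X (Sum.inl (Sum.inl i))) * π (X (Sum.inl (Sum.inr i))) = π (X (Sum.inr ())))
include hπ

lemma map_polarizedPsum_mem (c : ℕ × ℕ) :
    π (polarizedPsum c) ∈ (Algebra.adjoin k (nodalGenerators k m)).map π := by
  have ht : X (Sum.inr ()) ∈ Algebra.adjoin k (nodalGenerators k m) :=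
    Algebra.subset_adjoin (by simp [nodalGenerators])
  refine Subalgebra.mem_map.2 ?_
  rcases le_total c.2 c.1 with h | h
  · refine ⟨X (Sum.inr ()) ^ c.2 * rename (Sum.inl ∘ Sum.inl) (psum (Fin m) k (c.1 - c.2)),
      mul_mem (pow_mem ht _) (Algebra.adjoin_mono ?_
        ((psum_isSymmetric _ _ _).rename_mem_adjoin_rename_esymm _)),
      (map_sum_X_pow_mul_X_pow π hπ h).symm⟩
    exact Set.subset_union_of_subset_left Set.subset_union_right _
  · refine ⟨X (Sum.inr ()) ^ c.1 * rename (Sum.inl ∘ Sum.inr) (psum (Fin m) k (c.2 - c.1)),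
      mul_mem (pow_mem ht _) (Algebra.adjoin_mono Set.subset_union_right
        ((psum_isSymmetric _ _ _).rename_mem_adjoin_rename_esymm _)), ?_⟩
    rw [← map_sum_X_pow_mul_X_pow (u := Sum.inl ∘ Sum.inr) (w := Sum.inl ∘ Sum.inl) π
      (fun i => (mul_comm _ _).trans (hπ i)) h]
    exact congrArg π (sum_congr rfl fun i _ => mul_comm _ _)

lemma map_adjoin_polarizedPsum_le :
    (Algebra.adjoin k (insert (X (Sum.inr ())) (Set.range polarizedPsum))).map π ≤
      (Algebra.adjoin k (nodalGenerators k m)).map π := by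
  rw [AlgHom.map_adjoin, Algebra.adjoin_le_iff]
  rintro _ ⟨a, rfl | ⟨c, rfl⟩, rfl⟩
  · exact Subalgebra.mem_map.2 ⟨_, Algebra.subset_adjoin (by simp [nodalGenerators]), rfl⟩
  · exact map_polarizedPsum_mem π hπ c

end Quotient

end NodalSymmetricProduct

open NodalSymmetricProduct

/-- over a field of characteristic zero, every `Sₘ`-invariant element of
`k[x₁,…,xₘ,y₁,…,yₘ,t]/(xᵢyᵢ − t)` is a polynomial in `t` and the elementary symmetric
functions of the `x`'s and of the `y`'s (stated in the polynomial ring, modulo the ideal). -/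
theorem stmt_2 {k : Type*} [Field k] [CharZero k] (m : ℕ)
    (I : Ideal (MvPolynomial ((Fin m ⊕ Fin m) ⊕ Unit) k))
    (hI : I = Ideal.span (⋃ i : Fin m,
      {X (Sum.inl (Sum.inl i)) * X (Sum.inl (Sum.inr i)) - X (Sum.inr ())}))
    (f : MvPolynomial ((Fin m ⊕ Fin m) ⊕ Unit) k)
    (hf : ∀ g : Equiv.Perm (Fin m),
      rename (Sum.map (Sum.map (⇑g) (⇑g)) id) f - f ∈ I) :
    ∃ p ∈ Algebra.adjoin k
        (({X (Sum.inr ())} : Set (MvPolynomial ((Fin m ⊕ Fin m) ⊕ Unit) k)) ∪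
          (Set.range fun j : Fin (m + 1) =>
            rename (Sum.inl ∘ Sum.inl) (esymm (Fin m) k (j : ℕ))) ∪
          (Set.range fun j : Fin (m + 1) =>
            rename (Sum.inl ∘ Sum.inr) (esymm (Fin m) k (j : ℕ)))),
      f - p ∈ I := by
  set π := Ideal.Quotient.mkₐ k I
  have hπ : ∀ i, π (X (Sum.inl (Sum.inl i))) * π (X (Sum.inl (Sum.inr i))) =
      π (X (Sum.inr ())) := by
    intro i
    rw [← map_mul, Ideal.Quotient.mkₐ_eq_mk, Ideal.Quotient.eq, hI]
    exact Ideal.subset_span (Set.mem_iUnion.2 ⟨i, rfl⟩)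
  have hinv : ∀ g, π (diagPerm g f) = π f := fun g => Ideal.Quotient.eq.2 (hf g)
  have hcard : (Fintype.card (Equiv.Perm (Fin m)) : k) ≠ 0 :=
    Nat.cast_ne_zero.2 Fintype.card_ne_zero
  have hmem : π f ∈ (Algebra.adjoin k (nodalGenerators k m)).map π := by
    rw [← inv_smul_smul₀ hcard (π f), Nat.cast_smul_eq_nsmul,
      ← map_symmetrize_of_forall_map_diagPerm_eq π hinv]
    exact Subalgebra.smul_mem _ (map_adjoin_polarizedPsum_le π hπ
      (Subalgebra.mem_map.2 ⟨_, symmetrize_mem_adjoin f, rfl⟩)) _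
  obtain ⟨p, hp, hpf⟩ := Subalgebra.mem_map.1 hmem
  exact ⟨p, hp, Ideal.Quotient.eq.1 hpf.symm⟩
end

section
/- Let t be a nonzerodivisor in a commutative domain R and x₁,…,xₘ, y₁,…,yₘ ∈ R with xᵢyᵢ = t for all i. Define η_{i,j} = (σʸₘ)^{i+j-2} · δ / t^{(i-1)(m-i) + (j-1)(m-j)}, where δ = ∏_{a<b}(x_a − x_b)² is the discriminant of ∏(X − x_a) and σʸₘ = y₁⋯yₘ. Then η_{i,j} = Gᵢ·Gⱼ where Gᵢ is the i-th mixed Vandermonde determinant; in particular η_{i,j} ∈ R (no denominators remain), and η_{i,j} is symmetric in the simultaneous permutation action on the pairs (xₐ, yₐ). -/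
/-!
With `Δ = ∏_{a<b} (x_a - x_b)` we have `δ = Δ²`, so `η_{i,j} = G_i G_j` is a matter of
collecting exponents. `Δ` is the Vandermonde determinant of `-x`; in its Leibniz expansion,
multiplied by `(∏ y)^p`, every term is `± ∏_l x_{π l}^l y_{π l}^p`, and `x^l y^p` is divisible by
`t^{min l p}` because `x y = t`. Since `∑_{l<m} min l (i-1) = (i-1)(2m-i)/2`, each `G_i`, hence
each `η_{i,j}`, lies in `R`. Permuting the pairs multiplies the determinant by a sign, which
disappears in `δ`.
-/

open Finset Matrix

section

variable {R : Type*} [CommRing R]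

theorem Matrix.det_vandermonde_neg {m : ℕ} (u : Fin m → R) :
    (vandermonde (-u)).det = ∏ a : Fin m, ∏ b ∈ Ioi a, (u a - u b) := by
  simp only [det_vandermonde, Pi.neg_apply, neg_sub_neg]

theorem prod_Ioi_sub_sq_comp_perm {m : ℕ} (u : Fin m → R) (g : Equiv.Perm (Fin m)) :
    ∏ a : Fin m, ∏ b ∈ Ioi a, (u (g a) - u (g b)) ^ 2 =
      ∏ a : Fin m, ∏ b ∈ Ioi a, (u a - u b) ^ 2 := by
  have hperm : vandermonde (-(u ∘ g)) = (vandermonde (-u)).submatrix g id := rfl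
  simp only [prod_pow, ← Function.comp_apply (f := u), ← det_vandermonde_neg, hperm,
    det_permute, mul_pow]
  rw [← Int.cast_pow, ← Units.val_pow_eq_pow_val, Int.units_sq, Units.val_one, Int.cast_one,
    one_mul]

theorem pow_min_dvd_pow_mul_pow {a b t : R} (hab : a * b = t) (e p : ℕ) :
    t ^ min e p ∣ a ^ e * b ^ p := by
  rcases le_total e p with hle | hle
  · obtain ⟨d, rfl⟩ := Nat.exists_eq_add_of_le hle
    exact ⟨b ^ d, by rw [min_eq_left hle, ← hab]; ring⟩
  · obtain ⟨d, rfl⟩ := Nat.exists_eq_add_of_le hle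
    exact ⟨a ^ d, by rw [min_eq_right hle, ← hab]; ring⟩

theorem pow_sum_min_dvd_prod_pow_mul_prod_perm {m : ℕ} {t : R} {x y : Fin m → R}
    (h : ∀ l, x l * y l = t) (p : ℕ) (σ : Equiv.Perm (Fin m)) :
    t ^ (∑ l : Fin m, min (l : ℕ) p) ∣ (∏ l, y l) ^ p * ∏ l : Fin m, (-x (σ l)) ^ (l : ℕ) := by
  rw [← Equiv.prod_comp σ y, ← prod_pow, ← prod_mul_distrib, ← prod_pow_eq_pow_sum]
  refine prod_dvd_prod_of_dvd _ _ fun l _ => ?_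
  rw [neg_pow, mul_left_comm, mul_comm (y _ ^ p)]
  exact (pow_min_dvd_pow_mul_pow (h (σ l)) l p).mul_left _

theorem pow_sum_min_dvd_prod_pow_mul_prod_Ioi_sub {m : ℕ} {t : R} {x y : Fin m → R}
    (h : ∀ l, x l * y l = t) (p : ℕ) :
    t ^ (∑ c ∈ range m, min c p) ∣
      (∏ l, y l) ^ p * ∏ a : Fin m, ∏ b ∈ Ioi a, (x a - x b) := by
  rw [← det_vandermonde_neg, det_apply', mul_sum, ← Fin.sum_univ_eq_sum_range (min · p)]
  refine dvd_sum fun σ _ => ?_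
  rw [mul_left_comm]
  exact (pow_sum_min_dvd_prod_pow_mul_prod_perm h p σ).mul_left _

end

theorem sum_range_min_pred {m i : ℕ} (hi : 1 ≤ i) (him : i ≤ m) :
    ∑ c ∈ range m, min c (i - 1) = (i - 1) * (2 * m - i) / 2 := by
  obtain ⟨p, rfl⟩ : ∃ p, i = p + 1 := ⟨i - 1, by omega⟩
  obtain ⟨d, rfl⟩ : ∃ d, m = p + 1 + d := ⟨m - (p + 1), by omega⟩
  have hsum : ∑ c ∈ range (p + 1 + d), min c p = ∑ c ∈ range (p + 1), c + d * p := by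
    rw [sum_range_add,
      sum_congr rfl fun c hc => min_eq_left (Nat.lt_succ_iff.mp (mem_range.mp hc)),
      sum_congr rfl fun c _ => min_eq_right (by omega), sum_const, card_range, smul_eq_mul]
  have hgauss := sum_range_id_mul_two (p + 1)
  rw [Nat.add_sub_cancel] at hgauss ⊢
  rw [hsum, show 2 * (p + 1 + d) - (p + 1) = p + 1 + 2 * d by omega]
  refine (Nat.div_eq_of_eq_mul_left two_pos ?_).symm
  linarith

theorem exists_algebraMap_eq_div_pow_of_dvd {R K : Type*} [CommRing R] [Field K] [Algebra R K]
    [IsFractionRing R K] {a b : R} (hb : b ≠ 0) {e : ℕ} (hba : b ^ e ∣ a) :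
    ∃ r, algebraMap R K r = algebraMap R K a / algebraMap R K b ^ e := by
  obtain ⟨r, rfl⟩ := hba
  refine ⟨r, ?_⟩
  rw [map_mul, map_pow,
    mul_div_cancel_left₀ _ (pow_ne_zero _ (IsFractionRing.to_map_eq_zero_iff.not.mpr hb))]

theorem stmt_11_general {R : Type*} [CommRing R] (m : ℕ) (t : R) (ht : t ≠ 0)
    (x y : Fin m → R) (h : ∀ l, x l * y l = t)
    (K : Type*) [Field K] [Algebra R K] [IsFractionRing R K]
    (G : ℕ → K)
    (hG : ∀ i, G i = algebraMap R K ((∏ l, y l) ^ (i - 1) *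
          ∏ a : Fin m, ∏ b ∈ Finset.Ioi a, (x a - x b)) /
        algebraMap R K t ^ ((i - 1) * (2 * m - i) / 2))
    (δ : R) (hδ : δ = ∏ a : Fin m, ∏ b ∈ Finset.Ioi a, (x a - x b) ^ 2)
    (η : ℕ → ℕ → K)
    (hη : ∀ i j, η i j = algebraMap R K ((∏ l, y l) ^ (i + j - 2) * δ) /
        algebraMap R K t ^ ((i - 1) * (2 * m - i) / 2 + (j - 1) * (2 * m - j) / 2))
    (i j : ℕ) (hi : 1 ≤ i) (him : i ≤ m) (hj : 1 ≤ j) (hjm : j ≤ m) :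
    η i j = G i * G j ∧
    (∃ r : R, algebraMap R K r = η i j) ∧
    (∀ g : Equiv.Perm (Fin m),
      algebraMap R K ((∏ l, y (g l)) ^ (i + j - 2) *
          ∏ a : Fin m, ∏ b ∈ Finset.Ioi a, (x (g a) - x (g b)) ^ 2) /
        algebraMap R K t ^ ((i - 1) * (2 * m - i) / 2 + (j - 1) * (2 * m - j) / 2)
      = η i j) := by
  have hηG : η i j = G i * G j := by
    have hnum : (∏ l, y l) ^ (i + j - 2) * δ =
        ((∏ l, y l) ^ (i - 1) * ∏ a : Fin m, ∏ b ∈ Ioi a, (x a - x b)) *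
          ((∏ l, y l) ^ (j - 1) * ∏ a : Fin m, ∏ b ∈ Ioi a, (x a - x b)) := by
      rw [hδ, show i + j - 2 = (i - 1) + (j - 1) by omega]
      simp only [prod_pow]
      ring
    rw [hη, hG, hG, div_mul_div_comm, ← map_mul, ← hnum, pow_add]
  have hG_integral : ∀ k, 1 ≤ k → k ≤ m → ∃ r, algebraMap R K r = G k := fun k hk hkm => by
    rw [hG, ← sum_range_min_pred hk hkm]
    exact exists_algebraMap_eq_div_pow_of_dvd ht
      (pow_sum_min_dvd_prod_pow_mul_prod_Ioi_sub h (k - 1))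
  refine ⟨hηG, ?_, fun g => ?_⟩
  · obtain ⟨ri, hri⟩ := hG_integral i hi him
    obtain ⟨rj, hrj⟩ := hG_integral j hj hjm
    exact ⟨ri * rj, by rw [map_mul, hri, hrj, hηG]⟩
  · rw [hη, Equiv.prod_comp g y, prod_Ioi_sub_sq_comp_perm, hδ]

/-- in the fraction field of a domain `R` with `xᵢyᵢ = t ≠ 0`,
`η_{i,j} = (σʸₘ)^{i+j-2} δ / t^{(i-1)(m-i/2)+(j-1)(m-j/2)}` (with `δ` the discriminant
`∏_{a<b}(x_a − x_b)²`) satisfies `η_{i,j} = Gᵢ Gⱼ`; in particular `η_{i,j}` lies in `R`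
(no denominators remain), and `η_{i,j}` is symmetric under simultaneous permutations
of the pairs `(xₐ, yₐ)`. -/
theorem stmt_11 {R : Type*} [CommRing R] [IsDomain R] (m : ℕ) (t : R) (ht : t ≠ 0)
    (x y : Fin m → R) (h : ∀ l, x l * y l = t)
    (K : Type*) [Field K] [Algebra R K] [IsFractionRing R K]
    (G : ℕ → K)
    (hG : ∀ i, G i = algebraMap R K ((∏ l, y l) ^ (i - 1) *
          ∏ a : Fin m, ∏ b ∈ Finset.Ioi a, (x a - x b)) /
        algebraMap R K t ^ ((i - 1) * (2 * m - i) / 2))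
    (δ : R) (hδ : δ = ∏ a : Fin m, ∏ b ∈ Finset.Ioi a, (x a - x b) ^ 2)
    (η : ℕ → ℕ → K)
    (hη : ∀ i j, η i j = algebraMap R K ((∏ l, y l) ^ (i + j - 2) * δ) /
        algebraMap R K t ^ ((i - 1) * (2 * m - i) / 2 + (j - 1) * (2 * m - j) / 2))
    (i j : ℕ) (hi : 1 ≤ i) (him : i ≤ m) (hj : 1 ≤ j) (hjm : j ≤ m) :
    η i j = G i * G j ∧
    (∃ r : R, algebraMap R K r = η i j) ∧
    (∀ g : Equiv.Perm (Fin m),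
      algebraMap R K ((∏ l, y (g l)) ^ (i + j - 2) *
          ∏ a : Fin m, ∏ b ∈ Finset.Ioi a, (x (g a) - x (g b)) ^ 2) /
        algebraMap R K t ^ ((i - 1) * (2 * m - i) / 2 + (j - 1) * (2 * m - j) / 2)
      = η i j) :=
  stmt_11_general m t ht x y h K G hG δ hδ η hη i j hi him hj hjm
end

section
/- Let k ≥ 2 and consider distinct points x₁, …, xₐ on the x-axis and y₁, …, y_b on the y-axis of the nodal curve xy = 0 in 𝔸², with all points nonzero, and a + b = k. Then the mixed Vandermonde determinant G_{j} evaluated at the k points ((x₁,0),…,(xₐ,0),(0,y₁),…,(0,y_b)) (with the xy-coordinates of each point substituted into Vᵏⱼ) is nonzero if and only if j = b or j = b+1, i.e. Vᵏⱼ is singular at such a configuration unless j ∈ {b, b+1}. -/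
/-!
A row of `Vᵏⱼ` that is a positive power of `x` vanishes at the points of the `y`-axis, and a
row that is a positive power of `y` vanishes at the points of the `x`-axis. If there are more
than `a` rows of the first kind or more than `b` of the second, i.e. `j < b` or `j > b + 1`,
these rows are supported on too few columns and the determinant vanishes. For `j = b + 1` and
`j = b`, a kernel vector splits into its `x`-part and its `y`-part, and each part is killed by a
Vandermonde system in distinct points, possibly shifted by one power, which is harmless because
the points are nonzero.
-/

open Matrix Finset

namespace Matrix

variable {R : Type*} [CommRing R]

theorem det_eq_zero_of_card_lt_of_forall_eq_zero {n : Type*} [Fintype n] [DecidableEq n]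
    (M : Matrix n n R) (S T : Finset n) (hST : #T < #S) (h : ∀ r ∈ S, ∀ c ∉ T, M r c = 0) :
    M.det = 0 := by
  rw [det_apply]
  refine Finset.sum_eq_zero fun σ _ => ?_
  obtain ⟨r, hrS, hrT⟩ : ∃ r ∈ S, σ.symm r ∉ T := by
    by_contra! hST'
    exact hST.not_ge (card_le_card_of_injOn σ.symm hST' σ.symm.injective.injOn)
  rw [Finset.prod_eq_zero (mem_univ (σ.symm r)) (by simpa using h r hrS _ hrT), smul_zero]

/-- With `m = k - j` this is `Vᵏⱼ`, transposed: row `r` is the monomial `x ^ r` for `r ≤ m` and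
`y ^ (r - m)` beyond. -/
def mixedVandermonde {k : ℕ} (m : ℕ) (p : Fin k → R × R) : Matrix (Fin k) (Fin k) R :=
  of fun r c => if (r : ℕ) ≤ m then (p c).1 ^ (r : ℕ) else (p c).2 ^ ((r : ℕ) - m)

variable {k : ℕ} {m : ℕ} {p : Fin k → R × R}

section
variable [DecidableEq R]

theorem det_mixedVandermonde_eq_zero_of_card_fst_ne_zero_lt (hm : m < k)
    (hp : #{c | (p c).1 ≠ 0} < m) : (mixedVandermonde m p).det = 0 := by
  refine det_eq_zero_of_card_lt_of_forall_eq_zero _ (Ioc ⟨0, by omega⟩ ⟨m, hm⟩) _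
    (by simpa using hp) fun r hr c hc => ?_
  simp only [mem_Ioc, Fin.lt_def, Fin.le_def] at hr
  simp only [mem_filter, mem_univ, true_and, not_not] at hc
  simp only [mixedVandermonde, of_apply]
  simp [hr.2, hc, zero_pow (by omega : (r : ℕ) ≠ 0)]

theorem det_mixedVandermonde_eq_zero_of_card_snd_ne_zero_lt (hm : m < k)
    (hp : #{c | (p c).2 ≠ 0} < k - 1 - m) : (mixedVandermonde m p).det = 0 := by
  refine det_eq_zero_of_card_lt_of_forall_eq_zero _ (Ioi ⟨m, hm⟩) _
    (by simpa using hp) fun r hr c hc => ?_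
  simp only [mem_Ioi, Fin.lt_def] at hr
  simp only [mem_filter, mem_univ, true_and, not_not] at hc
  simp only [mixedVandermonde, of_apply]
  simp [hr.not_ge, hc, zero_pow (by omega : (r : ℕ) - m ≠ 0)]

end

theorem det_ne_zero_of_mulVec_append_eq_zero [IsDomain R] {a b : ℕ}
    {M : Matrix (Fin (a + b)) (Fin (a + b)) R}
    (h : ∀ u v, M *ᵥ Fin.append u v = 0 → u = 0 ∧ v = 0) : M.det ≠ 0 := by
  intro hdet
  obtain ⟨w, hw0, hw⟩ := exists_mulVec_eq_zero_iff.2 hdet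
  rw [← Fin.append_castAdd_natAdd (f := w)] at hw0 hw
  obtain ⟨hu, hv⟩ := h _ _ hw
  refine hw0 (funext fun c => Fin.addCases (fun i => ?_) (fun i => ?_) c)
  · simpa using congrFun hu i
  · simpa using congrFun hv i

theorem eq_zero_of_forall_sum_pow_succ_mul_eq_zero [IsDomain R] {n : ℕ} {f v : Fin n → R}
    (hf : Function.Injective f) (hf0 : ∀ i, f i ≠ 0)
    (hfv : ∀ s : Fin n, ∑ i, f i ^ ((s : ℕ) + 1) * v i = 0) : v = 0 := by
  have hfv' : (fun i => f i * v i) = 0 :=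
    eq_zero_of_forall_pow_sum_mul_pow_eq_zero hf fun s => by
      simpa [pow_succ, mul_comm, mul_left_comm, mul_assoc] using hfv s
  exact funext fun i => (mul_eq_zero.1 (congrFun hfv' i)).resolve_left (hf0 i)

def axisPoints {a b : ℕ} (x : Fin a → R) (y : Fin b → R) : Fin (a + b) → R × R :=
  Fin.append (fun i => (x i, 0)) (fun i => (0, y i))

section axisPoints

variable {a b : ℕ} {x : Fin a → R} {y : Fin b → R}

theorem card_fst_axisPoints_ne_zero_le [DecidableEq R] :
    #{c | (axisPoints x y c).1 ≠ 0} ≤ a := by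
  calc #{c | (axisPoints x y c).1 ≠ 0} ≤ #(univ.map (Fin.castAddEmb b)) :=
        card_le_card fun c hc => by
          rw [Finset.mem_filter] at hc
          induction c using Fin.addCases <;> simp_all [axisPoints]
    _ = a := by simp

theorem card_snd_axisPoints_ne_zero_le [DecidableEq R] :
    #{c | (axisPoints x y c).2 ≠ 0} ≤ b := by
  calc #{c | (axisPoints x y c).2 ≠ 0} ≤ #(univ.map (Fin.natAddEmb a)) :=
        card_le_card fun c hc => by
          rw [Finset.mem_filter] at hc
          induction c using Fin.addCases <;> simp_all [axisPoints]
    _ = b := by simp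

theorem mixedVandermonde_axisPoints_mulVec_append_of_le (u : Fin a → R) (v : Fin b → R)
    {r : Fin (a + b)} (hr : (r : ℕ) ≤ m) :
    (mixedVandermonde m (axisPoints x y) *ᵥ Fin.append u v) r =
      ∑ i, x i ^ (r : ℕ) * u i + 0 ^ (r : ℕ) * ∑ i, v i := by
  simp [mixedVandermonde, axisPoints, mulVec, dotProduct, Fin.sum_univ_add, hr, Finset.mul_sum]

theorem mixedVandermonde_axisPoints_mulVec_append_of_lt (u : Fin a → R) (v : Fin b → R)
    {r : Fin (a + b)} (hr : m < r) :
    (mixedVandermonde m (axisPoints x y) *ᵥ Fin.append u v) r =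
      ∑ i, y i ^ ((r : ℕ) - m) * v i := by
  simp [mixedVandermonde, axisPoints, mulVec, dotProduct, Fin.sum_univ_add, hr.not_ge,
    zero_pow (by omega : (r : ℕ) - m ≠ 0)]

variable [IsDomain R]

theorem det_mixedVandermonde_axisPoints_ne_zero_of_succ_eq (hx : Function.Injective x)
    (hy : Function.Injective y) (hy0 : ∀ i, y i ≠ 0) (hm : m + 1 = a) :
    (mixedVandermonde m (axisPoints x y)).det ≠ 0 := by
  refine det_ne_zero_of_mulVec_append_eq_zero fun u v huv => ?_
  have hv : v = 0 := eq_zero_of_forall_sum_pow_succ_mul_eq_zero hy hy0 fun s => by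
    have hrow := congrFun huv ⟨a + s, by omega⟩
    rwa [mixedVandermonde_axisPoints_mulVec_append_of_lt u v (by simp; omega),
      show a + (s : ℕ) - m = s + 1 by omega] at hrow
  refine ⟨eq_zero_of_forall_pow_sum_mul_pow_eq_zero hx fun s => ?_, hv⟩
  have hrow := congrFun huv ⟨s, by omega⟩
  rw [mixedVandermonde_axisPoints_mulVec_append_of_le u v (by simp; omega), hv] at hrow
  simpa [mul_comm] using hrow

theorem det_mixedVandermonde_axisPoints_ne_zero_of_eq (hx : Function.Injective x)
    (hy : Function.Injective y) (hx0 : ∀ i, x i ≠ 0) (hb : b ≠ 0) (hm : m = a) :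
    (mixedVandermonde m (axisPoints x y)).det ≠ 0 := by
  refine det_ne_zero_of_mulVec_append_eq_zero fun u v huv => ?_
  have hu : u = 0 := eq_zero_of_forall_sum_pow_succ_mul_eq_zero hx hx0 fun s => by
    have hrow := congrFun huv ⟨s + 1, by omega⟩
    rwa [mixedVandermonde_axisPoints_mulVec_append_of_le u v (by simp; omega), zero_pow (by simp),
      zero_mul, add_zero] at hrow
  refine ⟨hu, eq_zero_of_forall_pow_sum_mul_pow_eq_zero hy fun s => ?_⟩
  rcases Nat.eq_zero_or_pos s with hs | hs
  -- once `u = 0`, the row of ones supplies the equation for `y ^ 0`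
  · have hrow := congrFun huv ⟨0, by omega⟩
    rw [mixedVandermonde_axisPoints_mulVec_append_of_le u v (by simp), hu] at hrow
    simpa [hs] using hrow
  · have hrow := congrFun huv ⟨a + s, by omega⟩
    rw [mixedVandermonde_axisPoints_mulVec_append_of_lt u v (by simp; omega),
      show a + (s : ℕ) - m = s by omega] at hrow
    simpa [mul_comm] using hrow

end axisPoints

end Matrix

/-- for a configuration of `a` distinct nonzero points on the `x`-axis and
`b` distinct nonzero points on the `y`-axis of the nodal curve `xy = 0` (`a + b = k ≥ 2`),
the mixed Vandermonde matrix `Vᵏⱼ` (columns `(1, x, …, x^{k-j}, y, …, y^{j-1})ᵀ` evaluated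
at the `k` points) has nonzero determinant if and only if `j = b` or `j = b + 1`. -/
theorem stmt_14 (k a b j : ℕ) (hab : a + b = k) (hj1 : 1 ≤ j) (hjk : j ≤ k)
    (x : Fin a → ℂ) (y : Fin b → ℂ)
    (hxinj : Function.Injective x) (hyinj : Function.Injective y)
    (hx0 : ∀ l, x l ≠ 0) (hy0 : ∀ l, y l ≠ 0)
    (p : Fin k → ℂ × ℂ)
    (hp : ∀ c : Fin k, p c = if h : (c : ℕ) < a then (x ⟨c, h⟩, 0)
      else (0, y ⟨(c : ℕ) - a, by omega⟩)) :
    (Matrix.of fun r c : Fin k =>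
        if (r : ℕ) ≤ k - j then (p c).1 ^ (r : ℕ) else (p c).2 ^ ((r : ℕ) - (k - j))).det ≠ 0
      ↔ (j = b ∨ j = b + 1) := by
  subst hab
  obtain rfl : p = axisPoints x y := funext fun c => by
    induction c using Fin.addCases <;> simp [hp, axisPoints]
  change (mixedVandermonde (a + b - j) (axisPoints x y)).det ≠ 0 ↔ _
  refine ⟨fun hdet => ?_, ?_⟩
  · by_contra hj
    rcases (by omega : j < b ∨ b + 1 < j) with hj | hj
    · exact hdet (det_mixedVandermonde_eq_zero_of_card_fst_ne_zero_lt (by omega)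
        (card_fst_axisPoints_ne_zero_le.trans_lt (by omega)))
    · exact hdet (det_mixedVandermonde_eq_zero_of_card_snd_ne_zero_lt (by omega)
        (card_snd_axisPoints_ne_zero_le.trans_lt (by omega)))
  · rintro (rfl | rfl)
    · exact det_mixedVandermonde_axisPoints_ne_zero_of_eq hxinj hyinj hx0 (by omega) (by omega)
    · exact det_mixedVandermonde_axisPoints_ne_zero_of_succ_eq hxinj hyinj hy0 (by omega)
end

section
/- In the local model: let t ≠ 0 and consider the ideal I = (F₀, F₁, …, Fₘ) in ℂ[x,y]/(xy − t) at the chart U_i where u_{i-1} = v_i = 1, where F_{i-1} = x^{m-i+1} + a_{m-1}x^{m-i} + … + a_{i-1} + v_{i-1}(d_{m-i+2}y + … + y^{i-1}) and F_i = u_i(x^{m-i} + … + a_i) + d_{m-i+1}y + … + y^i, subject to the relations a_{j}u_{j} = d_{m-j}v_{j}. Then the quotient (ℂ[x,y]/(xy−t))/I is a free module of rank m with basis 1, x, …, x^{m-i}, y, …, y^{i-1}. -/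
/-!
Modulo `xy = t` the generators satisfy `u_k · x · F_{k+1} = u_{k+1} · F_k` (with the boundary
conventions `u₀ = 1`, `v₀ = 0`, `uₘ = d₀`, `vₘ = 1`), and on the chart `Uᵢ` every `u_k` is
nonzero, since `u_{k+1} = t u_k` for `k ≥ i`.

Spanning: `F_{i-1}` (where `u_{i-1} = 1`) writes `x^{m-i+1}`, and `F_i` (where `v_i = 1`) writes
`y^i`, in terms of `1, x, …, x^{m-i}, y, …, y^{i-1}`; together with `xy = t` this makes their span
stable under multiplication by `x` and `y`, hence equal to the whole quotient.

Independence: `G(z) = z^{i-1} F_{i-1}(z, t/z)` has degree `m` and `G(0) ≠ 0`, so the root `ρ` of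
`G` is invertible in `K[z]/(G)`. Sending `x ↦ ρ`, `y ↦ t ρ⁻¹` kills `xy - t` and `F_{i-1}`, hence
every `F_k` by the recursion, and gives a surjection of the quotient onto the `m`-dimensional
algebra `K[z]/(G)`. So the `m` spanning elements are linearly independent.
-/

open MvPolynomial
open scoped Polynomial

lemma MvPolynomial.top_le_of_one_mem_of_mul_X_mem {R σ A : Type*} [CommSemiring R] [Semiring A]
    [Algebra R A] (φ : MvPolynomial σ R →ₐ[R] A) (hφ : Function.Surjective φ)
    (W : Submodule R A) (h1 : 1 ∈ W) (hX : ∀ n, ∀ w ∈ W, φ (X n) * w ∈ W) : ⊤ ≤ W := by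
  rintro z -
  obtain ⟨p, rfl⟩ := hφ z
  suffices ∀ w ∈ W, φ p * w ∈ W by simpa using this 1 h1
  induction p using MvPolynomial.induction_on with
  | C c =>
    intro w hw
    rw [← MvPolynomial.algebraMap_eq, AlgHom.commutes, ← Algebra.smul_def]
    exact W.smul_mem c hw
  | add p q hp hq =>
    intro w hw
    rw [map_add, add_mul]
    exact add_mem (hp w hw) (hq w hw)
  | mul_X p n hp =>
    intro w hw
    rw [map_mul, mul_assoc]
    exact hp _ (hX n w hw)

lemma Polynomial.aeval_reflect_of_mul_eq_one {R A : Type*} [CommSemiring R] [CommSemiring A]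
    [Algebra R A] {x w : A} (hw : x * w = 1) {N : ℕ} {q : R[X]} (hq : q.natDegree ≤ N) :
    Polynomial.aeval x (q.reflect N) = x ^ N * Polynomial.aeval w q := by
  let : Invertible w := invertibleOfRightInverse w x (by rw [mul_comm, hw])
  calc Polynomial.aeval x (q.reflect N) = Polynomial.aeval x (q.reflect N) * (x * w) ^ N := by
        rw [hw, one_pow, mul_one]
    _ = x ^ N * (Polynomial.eval₂ (algebraMap R A) (⅟w) (q.reflect N) * w ^ N) := by
        rw [Polynomial.aeval_def, invOf_eq_right_inv (by rw [mul_comm, hw])]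
        ring
    _ = x ^ N * Polynomial.aeval w q := by
        rw [Polynomial.eval₂_reflect_mul_pow _ _ _ _ hq, Polynomial.aeval_def]

lemma AdjoinRoot.isUnit_root_of_isUnit_coeff_zero {R : Type*} [CommRing R] {f : R[X]}
    (h : IsUnit (f.coeff 0)) : IsUnit (AdjoinRoot.root f) := by
  obtain ⟨c, hc⟩ := h
  have hf := congrArg (AdjoinRoot.mk f) (Polynomial.X_mul_divX_add f)
  rw [map_add, map_mul, AdjoinRoot.mk_X, AdjoinRoot.mk_C, AdjoinRoot.mk_self, ← hc] at hf
  have hc' : AdjoinRoot.of f ↑c⁻¹ * AdjoinRoot.of f ↑c = 1 := by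
    rw [← map_mul, Units.inv_mul, map_one]
  refine IsUnit.of_mul_eq_one (-AdjoinRoot.of f ↑c⁻¹ * AdjoinRoot.mk f f.divX) ?_
  linear_combination -AdjoinRoot.of f ↑c⁻¹ * hf + hc'

lemma AdjoinRoot.aeval_root_surjective {R : Type*} [CommRing R] (f : R[X]) (z : AdjoinRoot f) :
    Function.Surjective (MvPolynomial.aeval (R := R) ![AdjoinRoot.root f, z]) := by
  intro s
  induction s using AdjoinRoot.induction_on with
  | ih p =>
    refine ⟨Polynomial.aeval (X 0) p, ?_⟩
    rw [← Polynomial.aeval_algHom_apply, MvPolynomial.aeval_X, Matrix.cons_val_zero,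
      AdjoinRoot.aeval_eq]

lemma linearIndependent_of_top_le_span_of_surjective {R M N ι : Type*} [CommRing R]
    [AddCommGroup M] [Module R M] [AddCommGroup N] [Module R N] [Fintype ι] (f : M →ₗ[R] N)
    (hf : Function.Surjective f) {b : ι → M} (hb : ⊤ ≤ Submodule.span R (Set.range b))
    (hcard : Fintype.card ι = Module.finrank R N) : LinearIndependent R b := by
  refine LinearIndependent.of_comp f
    (linearIndependent_of_top_le_span_of_card_eq_finrank ?_ hcard)
  rw [Set.range_comp, Submodule.span_image, top_le_iff.mp hb, Submodule.map_top,
    LinearMap.range_eq_top.mpr hf]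

lemma eq_zero_of_smul_mul_succ_eq {K A : Type*} [Field K] [CommRing A] [Algebra K A] {n : ℕ}
    {c : ℕ → K} {g : ℕ → A} {x : A} (hx : IsUnit x) (hc : ∀ k < n, c k ≠ 0)
    (hrec : ∀ k < n, c k • (x * g (k + 1)) = c (k + 1) • g k) {k₀ : ℕ} (hk₀ : k₀ < n)
    (h : g k₀ = 0) : ∀ k ≤ n, g k = 0 := by
  intro k hk
  rcases le_total k₀ k with hle | hle
  · induction k, hle using Nat.le_induction with
    | base => exact h
    | succ k hk₀k ih =>
      have hk' := hrec k (by omega)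
      rwa [ih (by omega), smul_zero, (isUnit_iff_ne_zero.mpr (hc k (by omega))).smul_eq_zero,
        hx.mul_right_eq_zero] at hk'
  · refine Nat.decreasingInduction (motive := fun k _ => g k = 0) (fun k hkk₀ ih => ?_) h hle
    have hk' := hrec k (by omega)
    rwa [ih, mul_zero, smul_zero, eq_comm,
      (isUnit_iff_ne_zero.mpr (hc (k + 1) (by omega))).smul_eq_zero] at hk'

noncomputable section

namespace NodalHilbertChart

variable {K : Type*} [Field K]

section Generators

variable (m : ℕ) (a d u v : ℕ → K)

/-- `u_k` extended by `u₀ = 1` and `uₘ = d₀` (and `v_k` below by `v₀ = 0`, `vₘ = 1`), so that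
`F₀ = x^m + …` and `Fₘ = d₀ + y^m + …` take the common shape
`F_k = u_k · xPart_k(x) + v_k · yPart_k(y)` of `F₁, …, F_{m-1}`. -/
def uCoeff (k : ℕ) : K := if k = 0 then 1 else if k = m then d 0 else u k

def vCoeff (k : ℕ) : K := if k = 0 then 0 else if k = m then 1 else v k

def xPart (k : ℕ) : K[X] :=
  Polynomial.X ^ (m - k) +
    ∑ r ∈ Finset.range (m - k), Polynomial.C (a (k + r)) * Polynomial.X ^ r

def yPart (k : ℕ) : K[X] :=
  Polynomial.X ^ k + ∑ s ∈ Finset.Ico 1 k, Polynomial.C (d (m - k + s)) * Polynomial.X ^ s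

/-- `F_k(x, y)`, for `x, y` in any `K`-algebra. -/
def gen {A : Type*} [CommRing A] [Algebra K A] (k : ℕ) (x y : A) : A :=
  algebraMap K A (uCoeff m d u k) * Polynomial.aeval x (xPart m a k)
    + algebraMap K A (vCoeff m v k) * Polynomial.aeval y (yPart m d k)

lemma xPart_eq {k : ℕ} (hk : k < m) :
    xPart m a k = Polynomial.X * xPart m a (k + 1) + Polynomial.C (a k) := by
  rw [xPart, xPart, show m - k = m - (k + 1) + 1 by omega, Finset.sum_range_succ', pow_succ',
    mul_add, Finset.mul_sum]
  simp only [add_zero, pow_zero, mul_one, pow_succ', add_assoc]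
  congr 2
  refine Finset.sum_congr rfl fun r _ => ?_
  rw [add_comm 1 r]
  ring

lemma yPart_succ {k : ℕ} (hk1 : 1 ≤ k) (hkm : k < m) :
    yPart m d (k + 1) = Polynomial.X * (yPart m d k + Polynomial.C (d (m - k))) := by
  rw [yPart, yPart, Finset.sum_eq_sum_Ico_succ_bot (by omega : 1 < k + 1),
    ← Finset.sum_Ico_add' (c := 1), mul_add, mul_add, Finset.mul_sum, pow_succ']
  rw [Finset.sum_congr rfl fun s _ => show Polynomial.C (d (m - (k + 1) + (s + 1))) *
      Polynomial.X ^ (s + 1) = Polynomial.X * (Polynomial.C (d (m - k + s)) * Polynomial.X ^ s) by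
    rw [show m - (k + 1) + (s + 1) = m - k + s by omega, pow_succ']; ring,
    show m - (k + 1) + 1 = m - k by omega]
  ring

lemma map_gen {A B : Type*} [CommRing A] [Algebra K A] [CommRing B] [Algebra K B]
    (φ : A →ₐ[K] B) (k : ℕ) (x y : A) :
    φ (gen m a d u v k x y) = gen m a d u v k (φ x) (φ y) := by
  simp only [gen, map_add, map_mul, AlgHom.commutes, Polynomial.aeval_algHom_apply]

end Generators

section Recursion

variable {m : ℕ} {a d u v : ℕ → K} {t : K} {A : Type*} [CommRing A] [Algebra K A] {x y : A}

lemma smul_mul_gen_one (hm : 2 ≤ m) (hxy : x * y = algebraMap K A t)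
    (h0 : a 0 * u 1 = t * v 1) :
    uCoeff m d u 0 • (x * gen m a d u v 1 x y) = uCoeff m d u 1 • gen m a d u v 0 x y := by
  have h0' := congrArg (algebraMap K A) h0
  simp only [map_mul] at h0'
  simp only [gen, Algebra.smul_def, xPart_eq m a (k := 0) (by omega), uCoeff, vCoeff, yPart,
    if_neg (show 1 ≠ m by omega), one_ne_zero, if_true, if_false, map_add, map_mul, map_one,
    map_zero, Polynomial.aeval_X, Polynomial.aeval_C, Polynomial.aeval_X_pow, pow_one,
    Finset.Ico_self, Finset.sum_empty, add_zero]
  linear_combination algebraMap K A (v 1) * hxy - h0'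

lemma smul_mul_gen_succ {k : ℕ} (hk1 : 1 ≤ k) (hkm : k < m) (hxy : x * y = algebraMap K A t)
    (hUV : uCoeff m d u (k + 1) * vCoeff m v k = t * (uCoeff m d u k * vCoeff m v (k + 1)))
    (haU : a k * uCoeff m d u k = d (m - k) * vCoeff m v k) :
    uCoeff m d u k • (x * gen m a d u v (k + 1) x y) =
      uCoeff m d u (k + 1) • gen m a d u v k x y := by
  have hUV' := congrArg (algebraMap K A) hUV
  have haU' := congrArg (algebraMap K A) haU
  simp only [map_mul] at hUV' haU'
  simp only [gen, Algebra.smul_def, xPart_eq m a hkm, yPart_succ m d hk1 hkm, map_add, map_mul,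
    Polynomial.aeval_X, Polynomial.aeval_C]
  linear_combination (algebraMap K A (uCoeff m d u k) * algebraMap K A (vCoeff m v (k + 1)) *
      (Polynomial.aeval y (yPart m d k) + algebraMap K A (d (m - k)))) * hxy
    - (Polynomial.aeval y (yPart m d k) + algebraMap K A (d (m - k))) * hUV'
    - algebraMap K A (uCoeff m d u (k + 1)) * haU'

end Recursion

section ChartRelations

variable {m i : ℕ} {t : K} {a d u v : ℕ → K}

lemma uCoeff_of_lt (hu : ∀ j, j < i → u j = 1) (him : i ≤ m) {k : ℕ} (hk : k < i) :
    uCoeff m d u k = 1 := by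
  unfold uCoeff
  split_ifs <;> first | rfl | omega | exact hu k hk

lemma vCoeff_of_le (hv : ∀ j, i ≤ j → v j = 1) (hi1 : 1 ≤ i) {k : ℕ} (hk : i ≤ k) :
    vCoeff m v k = 1 := by
  unfold vCoeff
  split_ifs <;> first | rfl | omega | exact hv k hk

lemma a_zero_mul_uCoeff_one (hm : 2 ≤ m) (h0 : a 0 * u 1 = t * v 1) :
    a 0 * uCoeff m d u 1 = t * vCoeff m v 1 := by
  simpa [uCoeff, vCoeff, show 1 ≠ m by omega] using h0

lemma uCoeff_succ_mul_vCoeff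
    (hC : ∀ j, 1 ≤ j → j ≤ m - 2 → v j * u (j + 1) = t * (u j * v (j + 1)))
    (hm0 : d 0 * v (m - 1) = t * u (m - 1)) {k : ℕ} (hk1 : 1 ≤ k) (hkm : k < m) :
    uCoeff m d u (k + 1) * vCoeff m v k = t * (uCoeff m d u k * vCoeff m v (k + 1)) := by
  simp only [uCoeff, vCoeff, if_neg (show k ≠ 0 by omega), if_neg (show k ≠ m by omega),
    if_neg (show k + 1 ≠ 0 by omega)]
  by_cases hk : k + 1 = m
  · subst hk
    simpa using hm0
  · simpa [hk, mul_comm] using hC k hk1 (by omega)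

lemma a_mul_uCoeff (hud : ∀ j, 1 ≤ j → j ≤ m - 1 → a j * u j = d (m - j) * v j) {k : ℕ}
    (hk1 : 1 ≤ k) (hkm : k < m) : a k * uCoeff m d u k = d (m - k) * vCoeff m v k := by
  simpa [uCoeff, vCoeff, show k ≠ 0 by omega, show k ≠ m by omega] using hud k hk1 (by omega)

lemma smul_mul_gen {A : Type*} [CommRing A] [Algebra K A] {x y : A} (hm : 2 ≤ m)
    (hxy : x * y = algebraMap K A t)
    (hC : ∀ j, 1 ≤ j → j ≤ m - 2 → v j * u (j + 1) = t * (u j * v (j + 1)))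
    (h0 : a 0 * u 1 = t * v 1) (hm0 : d 0 * v (m - 1) = t * u (m - 1))
    (hud : ∀ j, 1 ≤ j → j ≤ m - 1 → a j * u j = d (m - j) * v j) {k : ℕ} (hk : k < m) :
    uCoeff m d u k • (x * gen m a d u v (k + 1) x y) =
      uCoeff m d u (k + 1) • gen m a d u v k x y := by
  rcases Nat.eq_zero_or_pos k with rfl | hk1
  · exact smul_mul_gen_one hm hxy h0
  · exact smul_mul_gen_succ hk1 hk hxy (uCoeff_succ_mul_vCoeff hC hm0 hk1 hk)
      (a_mul_uCoeff hud hk1 hk)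

lemma uCoeff_ne_zero (hm : 2 ≤ m) (hi1 : 1 ≤ i) (him : i ≤ m) (ht : t ≠ 0)
    (hu : ∀ j, j < i → u j = 1) (hv : ∀ j, i ≤ j → v j = 1)
    (hC : ∀ j, 1 ≤ j → j ≤ m - 2 → v j * u (j + 1) = t * (u j * v (j + 1)))
    (h0 : a 0 * u 1 = t * v 1) (hm0 : d 0 * v (m - 1) = t * u (m - 1)) :
    ∀ k ≤ m, uCoeff m d u k ≠ 0 := by
  intro k hk
  induction k with
  | zero => simp [uCoeff]
  | succ k ih =>
    by_cases hki : k + 1 < i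
    · rw [uCoeff_of_lt hu him hki]
      exact one_ne_zero
    have hV : vCoeff m v (k + 1) = 1 := vCoeff_of_le hv hi1 (by omega)
    rcases Nat.eq_zero_or_pos k with rfl | hk1
    · have h := a_zero_mul_uCoeff_one (d := d) hm h0
      rw [hV, mul_one] at h
      exact right_ne_zero_of_mul (h ▸ ht)
    · have h := uCoeff_succ_mul_vCoeff hC hm0 hk1 (by omega : k < m)
      rw [hV, mul_one] at h
      exact left_ne_zero_of_mul (h ▸ mul_ne_zero ht (ih (by omega)))

end ChartRelations

section GenPoly

variable (m : ℕ) (t : K) (a d u v : ℕ → K)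

/-- `z^k F_k(z, t/z)`. -/
def genPoly (k : ℕ) : K[X] :=
  Polynomial.C (uCoeff m d u k) * (Polynomial.X ^ k * xPart m a k)
    + Polynomial.C (vCoeff m v k) * ((yPart m d k).comp (Polynomial.C t * Polynomial.X)).reflect k

lemma degree_sum_range_C_mul_X_pow_lt (n : ℕ) (c : ℕ → K) :
    (∑ r ∈ Finset.range n, Polynomial.C (c r) * Polynomial.X ^ r).degree < (n : WithBot ℕ) := by
  rw [Finset.sum_range (fun r => Polynomial.C (c r) * Polynomial.X ^ r)]
  exact Polynomial.degree_sum_fin_lt _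

lemma xPart_monic (k : ℕ) : (xPart m a k).Monic :=
  Polynomial.monic_X_pow_add (degree_sum_range_C_mul_X_pow_lt _ _)

lemma natDegree_xPart (k : ℕ) : (xPart m a k).natDegree = m - k := by
  rw [xPart, Polynomial.natDegree_add_eq_left_of_degree_lt, Polynomial.natDegree_X_pow]
  rw [Polynomial.degree_X_pow]
  exact degree_sum_range_C_mul_X_pow_lt _ _

lemma natDegree_yPart_le (k : ℕ) : (yPart m d k).natDegree ≤ k :=
  Polynomial.natDegree_add_le_of_degree_le (Polynomial.natDegree_X_pow_le k)
    (Polynomial.natDegree_sum_le_of_forall_le _ _ fun s hs =>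
      (Polynomial.natDegree_C_mul_X_pow_le _ s).trans (Finset.mem_Ico.mp hs).2.le)

lemma natDegree_yPart_comp_le (k : ℕ) :
    ((yPart m d k).comp (Polynomial.C t * Polynomial.X)).natDegree ≤ k :=
  calc _ ≤ k * 1 := Polynomial.natDegree_comp_le.trans <|
        Nat.mul_le_mul (natDegree_yPart_le m d k)
          ((Polynomial.natDegree_C_mul_le _ _).trans Polynomial.natDegree_X_le)
    _ = k := mul_one k

lemma coeff_yPart_self (k : ℕ) : (yPart m d k).coeff k = 1 := by
  simp [yPart, Polynomial.coeff_X_pow]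

lemma natDegree_genPoly {k : ℕ} (hkm : k < m) (hU : uCoeff m d u k ≠ 0) :
    (genPoly m t a d u v k).natDegree = m := by
  have hx : (Polynomial.C (uCoeff m d u k) * (Polynomial.X ^ k * xPart m a k)).natDegree = m := by
    rw [Polynomial.natDegree_C_mul hU,
      (Polynomial.monic_X_pow k).natDegree_mul (xPart_monic m a k), Polynomial.natDegree_X_pow,
      natDegree_xPart]
    omega
  have hy : (Polynomial.C (vCoeff m v k) *
      ((yPart m d k).comp (Polynomial.C t * Polynomial.X)).reflect k).natDegree ≤ k :=
    (Polynomial.natDegree_C_mul_le _ _).trans <|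
      Polynomial.natDegree_reflect_le.trans (max_le le_rfl (natDegree_yPart_comp_le m t d k))
  rw [genPoly, Polynomial.natDegree_add_eq_left_of_natDegree_lt (by omega), hx]

lemma genPoly_zero_coeff_zero (hm : 1 ≤ m) : (genPoly m t a d u v 0).coeff 0 = a 0 := by
  simp [genPoly, uCoeff, vCoeff, xPart, Polynomial.coeff_X_pow, show 0 ≠ m by omega,
    show 0 < m by omega]

lemma genPoly_coeff_zero {k : ℕ} (hk : 1 ≤ k) :
    (genPoly m t a d u v k).coeff 0 = vCoeff m v k * t ^ k := by
  rw [genPoly, Polynomial.coeff_add, Polynomial.coeff_C_mul, Polynomial.coeff_C_mul,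
    Polynomial.coeff_X_pow_mul', if_neg (by omega), Polynomial.coeff_reflect,
    Polynomial.revAt_le (Nat.zero_le k), Nat.sub_zero, Polynomial.comp_C_mul_X_coeff,
    coeff_yPart_self, mul_zero, zero_add, one_mul]

lemma aeval_genPoly {A : Type*} [CommRing A] [Algebra K A] {x w : A} (hw : x * w = 1) (k : ℕ) :
    Polynomial.aeval x (genPoly m t a d u v k) =
      x ^ k * gen m a d u v k x (algebraMap K A t * w) := by
  rw [genPoly, gen, map_add, map_mul, map_mul, map_mul, Polynomial.aeval_C, Polynomial.aeval_C,
    Polynomial.aeval_X_pow,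
    Polynomial.aeval_reflect_of_mul_eq_one hw (natDegree_yPart_comp_le m t d k),
    Polynomial.aeval_comp]
  simp only [map_mul, Polynomial.aeval_C, Polynomial.aeval_X]
  ring

end GenPoly

section Spanning

variable {A : Type*} [CommRing A] [Algebra K A]

def chartBasis (m i : ℕ) (x y : A) (j : Fin m) : A :=
  if (j : ℕ) ≤ m - i then x ^ (j : ℕ) else y ^ ((j : ℕ) - (m - i))

variable (K) in
abbrev chartSpan (m i : ℕ) (x y : A) : Submodule K A :=
  Submodule.span K (Set.range (chartBasis m i x y))

variable {m i : ℕ} {t : K} {a d u v : ℕ → K} (x y : A)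

lemma mul_pow_succ_of_mul_eq (hxy : x * y = algebraMap K A t) (n : ℕ) :
    x * y ^ (n + 1) = t • y ^ n := by
  rw [pow_succ', ← mul_assoc, hxy, Algebra.smul_def]

lemma pow_mem_chartSpan_left (hi1 : 1 ≤ i) (him : i ≤ m) {e : ℕ} (he : e ≤ m - i) :
    x ^ e ∈ chartSpan K m i x y :=
  Submodule.subset_span ⟨⟨e, by omega⟩, by simp [chartBasis, he]⟩

lemma pow_mem_chartSpan_right (hi1 : 1 ≤ i) (him : i ≤ m) {s : ℕ} (hs : s ≤ i - 1) :
    y ^ s ∈ chartSpan K m i x y := by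
  rcases Nat.eq_zero_or_pos s with rfl | hs1
  · simpa using pow_mem_chartSpan_left x y hi1 him (Nat.zero_le _)
  · exact Submodule.subset_span ⟨⟨m - i + s, by omega⟩, by simp [chartBasis, hs1.ne']⟩

lemma aeval_xPart_sub_mem (W : Submodule K A) {k : ℕ} (h : ∀ r < m - k, x ^ r ∈ W) :
    Polynomial.aeval x (xPart m a k) - x ^ (m - k) ∈ W := by
  rw [xPart, map_add, Polynomial.aeval_X_pow, add_sub_cancel_left, map_sum]
  refine Submodule.sum_mem _ fun r hr => ?_
  rw [map_mul, Polynomial.aeval_C, Polynomial.aeval_X_pow, ← Algebra.smul_def]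
  exact W.smul_mem _ (h r (Finset.mem_range.mp hr))

lemma aeval_yPart_sub_mem (W : Submodule K A) {k : ℕ} (h : ∀ s, 1 ≤ s → s < k → y ^ s ∈ W) :
    Polynomial.aeval y (yPart m d k) - y ^ k ∈ W := by
  rw [yPart, map_add, Polynomial.aeval_X_pow, add_sub_cancel_left, map_sum]
  refine Submodule.sum_mem _ fun s hs => ?_
  rw [map_mul, Polynomial.aeval_C, Polynomial.aeval_X_pow, ← Algebra.smul_def]
  exact W.smul_mem _ (h s (Finset.mem_Ico.mp hs).1 (Finset.mem_Ico.mp hs).2)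

lemma pow_mem_chartSpan_left_of_gen (hi1 : 1 ≤ i) (him : i ≤ m)
    (hU : uCoeff m d u (i - 1) = 1) (hgen : gen m a d u v (i - 1) x y = 0) :
    x ^ (m - i + 1) ∈ chartSpan K m i x y := by
  have hP := aeval_xPart_sub_mem (m := m) (a := a) x (chartSpan K m i x y) (k := i - 1)
    fun r hr => pow_mem_chartSpan_left x y hi1 him (by omega)
  have hD : Polynomial.aeval y (yPart m d (i - 1)) ∈ chartSpan K m i x y := by
    simpa using add_mem (aeval_yPart_sub_mem (m := m) (d := d) y _ (k := i - 1)
      fun s _ hs => pow_mem_chartSpan_right x y hi1 him (by omega))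
      (pow_mem_chartSpan_right x y hi1 him le_rfl)
  rw [gen, hU, map_one, one_mul] at hgen
  have hx : x ^ (m - i + 1) = -(Polynomial.aeval x (xPart m a (i - 1)) - x ^ (m - (i - 1)))
      - vCoeff m v (i - 1) • Polynomial.aeval y (yPart m d (i - 1)) := by
    rw [Algebra.smul_def, show m - (i - 1) = m - i + 1 by omega]
    linear_combination hgen
  rw [hx]
  exact sub_mem (neg_mem hP) (Submodule.smul_mem _ _ hD)

lemma pow_mem_chartSpan_right_of_gen (hi1 : 1 ≤ i) (him : i ≤ m)
    (hV : vCoeff m v i = 1) (hgen : gen m a d u v i x y = 0) :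
    y ^ i ∈ chartSpan K m i x y := by
  have hP : Polynomial.aeval x (xPart m a i) ∈ chartSpan K m i x y := by
    simpa using add_mem (aeval_xPart_sub_mem (m := m) (a := a) x _ (k := i)
      fun r hr => pow_mem_chartSpan_left x y hi1 him (by omega))
      (pow_mem_chartSpan_left x y hi1 him le_rfl)
  have hD := aeval_yPart_sub_mem (m := m) (d := d) y (chartSpan K m i x y) (k := i)
    fun s _ hs => pow_mem_chartSpan_right x y hi1 him (by omega)
  rw [gen, hV, map_one, one_mul] at hgen
  have hy : y ^ i = -(Polynomial.aeval y (yPart m d i) - y ^ i)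
      - uCoeff m d u i • Polynomial.aeval x (xPart m a i) := by
    rw [Algebra.smul_def]
    linear_combination hgen
  rw [hy]
  exact sub_mem (neg_mem hD) (Submodule.smul_mem _ _ hP)

lemma mul_mem_chartSpan (hxy : x * y = algebraMap K A t) (hi1 : 1 ≤ i) (him : i ≤ m)
    (hx : x ^ (m - i + 1) ∈ chartSpan K m i x y) (hy : y ^ i ∈ chartSpan K m i x y) {w : A}
    (hw : w ∈ chartSpan K m i x y) :
    x * w ∈ chartSpan K m i x y ∧ y * w ∈ chartSpan K m i x y := by
  set W := chartSpan K m i x y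
  have hyx : y * x = algebraMap K A t := by rw [mul_comm, hxy]
  have hxW : ∀ e ≤ m - i + 1, x ^ e ∈ W := fun e he => by
    rcases Nat.lt_or_eq_of_le he with he | rfl
    · exact pow_mem_chartSpan_left x y hi1 him (by omega)
    · exact hx
  have hyW : ∀ s ≤ i, y ^ s ∈ W := fun s hs => by
    rcases Nat.lt_or_eq_of_le hs with hs | rfl
    · exact pow_mem_chartSpan_right x y hi1 him (by omega)
    · exact hy
  induction hw using Submodule.span_induction with
  | mem _ hb =>
    obtain ⟨j, rfl⟩ := hb
    unfold chartBasis
    split_ifs with hj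
    · refine ⟨by rw [← pow_succ']; exact hxW _ (by omega), ?_⟩
      rcases Nat.eq_zero_or_pos (j : ℕ) with hj0 | hj0
      · rw [hj0, pow_zero, mul_one, ← pow_one y]
        exact hyW 1 hi1
      · obtain ⟨e, he⟩ : ∃ e, (j : ℕ) = e + 1 := ⟨j - 1, by omega⟩
        rw [he, mul_pow_succ_of_mul_eq y x hyx]
        exact W.smul_mem _ (hxW e (by omega))
    · obtain ⟨s, hs⟩ : ∃ s, (j : ℕ) - (m - i) = s + 1 := ⟨(j : ℕ) - (m - i) - 1, by omega⟩
      rw [hs, mul_pow_succ_of_mul_eq x y hxy, ← pow_succ']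
      exact ⟨W.smul_mem _ (hyW s (by omega)), hyW _ (by omega)⟩
  | zero => simp
  | add _ _ _ _ hw hw' => simpa only [mul_add] using ⟨add_mem hw.1 hw'.1, add_mem hw.2 hw'.2⟩
  | smul c _ _ hw => simpa only [mul_smul_comm] using ⟨W.smul_mem c hw.1, W.smul_mem c hw.2⟩

end Spanning

lemma eq_gen_of_formulas {m : ℕ} {a d u v : ℕ → K} (hm : 0 < m) (F : ℕ → MvPolynomial (Fin 2) K)
    (hF0 : F 0 = X 0 ^ m + ∑ r ∈ Finset.range m, C (a r) * X 0 ^ r)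
    (hFm : F m = C (d 0) + X 1 ^ m + ∑ s ∈ Finset.Ico 1 m, C (d s) * X 1 ^ s)
    (hFk : ∀ k, 1 ≤ k → k ≤ m - 1 →
      F k = C (u k) * (X 0 ^ (m - k) + ∑ r ∈ Finset.range (m - k), C (a (k + r)) * X 0 ^ r)
        + C (v k) * (X 1 ^ k + ∑ s ∈ Finset.Ico 1 k, C (d (m - k + s)) * X 1 ^ s))
    {k : ℕ} (hk : k ≤ m) : F k = gen m a d u v k (X 0) (X 1) := by
  rcases Nat.eq_zero_or_pos k with rfl | hk0
  · simp [hF0, gen, uCoeff, vCoeff, xPart, MvPolynomial.algebraMap_eq]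
  by_cases hkm : k = m
  · subst hkm
    simp [hFm, gen, uCoeff, vCoeff, xPart, yPart, hm.ne', MvPolynomial.algebraMap_eq, add_assoc]
  · simp [hFk k hk0 (by omega), gen, uCoeff, vCoeff, xPart, yPart, hk0.ne', hkm,
      MvPolynomial.algebraMap_eq]

def chartIdeal (m : ℕ) (t : K) (a d u v : ℕ → K) : Ideal (MvPolynomial (Fin 2) K) :=
  Ideal.span ({X 0 * X 1 - C t} ∪ {p | ∃ k ≤ m, p = gen m a d u v k (X 0) (X 1)})

section Quotient

variable {m i : ℕ} {t : K} {a d u v : ℕ → K}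

lemma chartIdeal_le_ker {A : Type*} [CommRing A] [Algebra K A]
    (φ : MvPolynomial (Fin 2) K →ₐ[K] A) (hxy : φ (X 0) * φ (X 1) = algebraMap K A t)
    (hgen : ∀ k ≤ m, gen m a d u v k (φ (X 0)) (φ (X 1)) = 0) :
    chartIdeal m t a d u v ≤ RingHom.ker φ := by
  rw [chartIdeal, Ideal.span_le]
  rintro p (hp | ⟨k, hk, rfl⟩)
  · rw [Set.mem_singleton_iff.mp hp, SetLike.mem_coe, RingHom.mem_ker, map_sub, map_mul,
      ← MvPolynomial.algebraMap_eq, AlgHom.commutes, hxy, sub_self]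
  · rw [SetLike.mem_coe, RingHom.mem_ker, map_gen]
    exact hgen k hk

lemma mk_X_mul_mk_X :
    Ideal.Quotient.mk (chartIdeal m t a d u v) (X 0) * Ideal.Quotient.mk _ (X 1) =
      algebraMap K _ t := by
  rw [← map_mul, IsScalarTower.algebraMap_apply K (MvPolynomial (Fin 2) K),
    Ideal.Quotient.algebraMap_eq, MvPolynomial.algebraMap_eq, Ideal.Quotient.eq]
  exact Ideal.subset_span (Or.inl rfl)

lemma gen_mk_X_eq_zero {k : ℕ} (hk : k ≤ m) :
    gen m a d u v k (Ideal.Quotient.mk (chartIdeal m t a d u v) (X 0))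
      (Ideal.Quotient.mk _ (X 1)) = 0 := by
  rw [← Ideal.Quotient.mkₐ_eq_mk K, ← map_gen, Ideal.Quotient.mkₐ_eq_mk,
    Ideal.Quotient.eq_zero_iff_mem]
  exact Ideal.subset_span (Or.inr ⟨k, hk, rfl⟩)

lemma top_le_chartSpan_mk (hi1 : 1 ≤ i) (him : i ≤ m)
    (hu : ∀ j, j < i → u j = 1) (hv : ∀ j, i ≤ j → v j = 1) :
    ⊤ ≤ chartSpan K m i (Ideal.Quotient.mk (chartIdeal m t a d u v) (X 0))
      (Ideal.Quotient.mk _ (X 1)) := by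
  set x := Ideal.Quotient.mk (chartIdeal m t a d u v) (X 0)
  set y := Ideal.Quotient.mk (chartIdeal m t a d u v) (X 1)
  have hx := pow_mem_chartSpan_left_of_gen x y hi1 him (uCoeff_of_lt hu him (by omega))
    (gen_mk_X_eq_zero (by omega))
  have hy := pow_mem_chartSpan_right_of_gen x y hi1 him (vCoeff_of_le hv hi1 le_rfl)
    (gen_mk_X_eq_zero him)
  refine MvPolynomial.top_le_of_one_mem_of_mul_X_mem (Ideal.Quotient.mkₐ K _)
    (Ideal.Quotient.mkₐ_surjective K _) _ ?_ ?_
  · simpa using pow_mem_chartSpan_left x y hi1 him (Nat.zero_le _)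
  · simp only [Fin.forall_fin_two, Ideal.Quotient.mkₐ_eq_mk]
    exact ⟨fun w hw => (mul_mem_chartSpan x y mk_X_mul_mk_X hi1 him hx hy hw).1,
      fun w hw => (mul_mem_chartSpan x y mk_X_mul_mk_X hi1 him hx hy hw).2⟩

lemma coeff_zero_genPoly_ne_zero (hm : 2 ≤ m) (hi1 : 1 ≤ i) (him : i ≤ m) (ht : t ≠ 0)
    (hu : ∀ j, j < i → u j = 1) (hv : ∀ j, i ≤ j → v j = 1)
    (hC : ∀ j, 1 ≤ j → j ≤ m - 2 → v j * u (j + 1) = t * (u j * v (j + 1)))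
    (h0 : a 0 * u 1 = t * v 1) (hm0 : d 0 * v (m - 1) = t * u (m - 1)) :
    (genPoly m t a d u v (i - 1)).coeff 0 ≠ 0 := by
  rcases Nat.lt_or_ge 1 i with hi | hi
  · rw [genPoly_coeff_zero m t a d u v (by omega)]
    refine mul_ne_zero ?_ (pow_ne_zero _ ht)
    have h := uCoeff_succ_mul_vCoeff hC hm0 (k := i - 1) (by omega) (by omega)
    rw [Nat.sub_add_cancel hi1, vCoeff_of_le hv hi1 le_rfl,
      uCoeff_of_lt hu him (k := i - 1) (by omega), mul_one, mul_one] at h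
    exact right_ne_zero_of_mul (h ▸ ht)
  · obtain rfl : i = 1 := by omega
    rw [Nat.sub_self, genPoly_zero_coeff_zero m t a d u v (by omega)]
    have h := a_zero_mul_uCoeff_one (d := d) hm h0
    rw [vCoeff_of_le hv hi1 le_rfl, mul_one] at h
    exact left_ne_zero_of_mul (h ▸ ht)

lemma gen_root_eq_zero (hm : 2 ≤ m) (hi1 : 1 ≤ i) (him : i ≤ m) (ht : t ≠ 0)
    (hu : ∀ j, j < i → u j = 1) (hv : ∀ j, i ≤ j → v j = 1)
    (hC : ∀ j, 1 ≤ j → j ≤ m - 2 → v j * u (j + 1) = t * (u j * v (j + 1)))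
    (h0 : a 0 * u 1 = t * v 1) (hm0 : d 0 * v (m - 1) = t * u (m - 1))
    (hud : ∀ j, 1 ≤ j → j ≤ m - 1 → a j * u j = d (m - j) * v j)
    {w : AdjoinRoot (genPoly m t a d u v (i - 1))} (hw : AdjoinRoot.root _ * w = 1) :
    ∀ k ≤ m, gen m a d u v k (AdjoinRoot.root _) (algebraMap K _ t * w) = 0 := by
  have hρ := IsUnit.of_mul_eq_one w hw
  have hxy : AdjoinRoot.root _ * (algebraMap K _ t * w) = algebraMap K _ t := by
    rw [mul_left_comm, hw, mul_one]
  refine eq_zero_of_smul_mul_succ_eq hρ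
    (fun k hk => uCoeff_ne_zero hm hi1 him ht hu hv hC h0 hm0 k hk.le)
    (fun k hk => smul_mul_gen hm hxy hC h0 hm0 hud hk) (k₀ := i - 1) (by omega) ?_
  have h := aeval_genPoly m t a d u v hw (i - 1)
  rwa [AdjoinRoot.aeval_eq, AdjoinRoot.mk_self, eq_comm, (hρ.pow _).mul_right_eq_zero] at h

lemma linearIndependent_chartBasis_mk (hm : 2 ≤ m) (hi1 : 1 ≤ i) (him : i ≤ m) (ht : t ≠ 0)
    (hu : ∀ j, j < i → u j = 1) (hv : ∀ j, i ≤ j → v j = 1)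
    (hC : ∀ j, 1 ≤ j → j ≤ m - 2 → v j * u (j + 1) = t * (u j * v (j + 1)))
    (h0 : a 0 * u 1 = t * v 1) (hm0 : d 0 * v (m - 1) = t * u (m - 1))
    (hud : ∀ j, 1 ≤ j → j ≤ m - 1 → a j * u j = d (m - j) * v j) :
    LinearIndependent K (chartBasis m i
      (Ideal.Quotient.mk (chartIdeal m t a d u v) (X 0)) (Ideal.Quotient.mk _ (X 1))) := by
  set G := genPoly m t a d u v (i - 1)
  have hG : G.natDegree = m := natDegree_genPoly m t a d u v (by omega)
    (uCoeff_ne_zero hm hi1 him ht hu hv hC h0 hm0 _ (by omega))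
  obtain ⟨w, hw⟩ := (AdjoinRoot.isUnit_root_of_isUnit_coeff_zero (isUnit_iff_ne_zero.mpr
    (coeff_zero_genPoly_ne_zero hm hi1 him ht hu hv hC h0 hm0))).exists_right_inv
  set φ := MvPolynomial.aeval (R := K) ![AdjoinRoot.root G, algebraMap K _ t * w]
  have hx0 : φ (X 0) = AdjoinRoot.root G := by simp [φ]
  have hx1 : φ (X 1) = algebraMap K _ t * w := by simp [φ]
  have hker : ∀ p ∈ chartIdeal m t a d u v, φ p = 0 := fun p hp =>
    chartIdeal_le_ker φ (by rw [hx0, hx1, mul_left_comm, hw, mul_one])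
      (by rw [hx0, hx1]; exact gen_root_eq_zero hm hi1 him ht hu hv hC h0 hm0 hud hw) hp
  refine linearIndependent_of_top_le_span_of_surjective
    (Ideal.Quotient.liftₐ _ φ hker).toLinearMap
    (Ideal.Quotient.lift_surjective_of_surjective _ (f := φ.toRingHom) hker
      (AdjoinRoot.aeval_root_surjective G _))
    (top_le_chartSpan_mk hi1 him hu hv) ?_
  rw [Fintype.card_fin, (AdjoinRoot.powerBasis (Polynomial.ne_zero_of_natDegree_gt
    (n := 0) (by omega))).finrank, AdjoinRoot.powerBasis_dim, hG]

end Quotient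

end NodalHilbertChart

end

/-- in the local model of the relative Hilbert scheme of the node `xy = t`
(`t ≠ 0`), on the chart `Uᵢ` (`u_j = 1` for `j < i`, `v_j = 1` for `j ≥ i`), with the chart
relations, the quotient of `ℂ[x,y]/(xy − t)` by the universal ideal `I = (F₀, …, Fₘ)` is a
free module of rank `m` with basis `1, x, …, x^{m-i}, y, …, y^{i-1}`. -/
theorem stmt_15 (m i : ℕ) (hm : 2 ≤ m) (hi1 : 1 ≤ i) (him : i ≤ m)
    (t : ℂ) (ht : t ≠ 0) (a d u v : ℕ → ℂ)
    -- chart U_i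
    (hu : ∀ jj, jj < i → u jj = 1) (hv : ∀ jj, i ≤ jj → v jj = 1)
    -- equations of C̃
    (hC : ∀ jj, 1 ≤ jj → jj ≤ m - 2 → v jj * u (jj + 1) = t * (u jj * v (jj + 1)))
    -- equations of the local Hilbert scheme H̃
    (h0 : a 0 * u 1 = t * v 1) (hm0 : d 0 * v (m - 1) = t * u (m - 1))
    (hud : ∀ jj, 1 ≤ jj → jj ≤ m - 1 → a jj * u jj = d (m - jj) * v jj)
    -- the universal generators F₀, …, Fₘ
    (F : ℕ → MvPolynomial (Fin 2) ℂ)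
    (hF0 : F 0 = X 0 ^ m + ∑ r ∈ Finset.range m, C (a r) * X 0 ^ r)
    (hFm : F m = C (d 0) + X 1 ^ m + ∑ s ∈ Finset.Ico 1 m, C (d s) * X 1 ^ s)
    (hFk : ∀ kk, 1 ≤ kk → kk ≤ m - 1 →
      F kk = C (u kk) *
          (X 0 ^ (m - kk) + ∑ r ∈ Finset.range (m - kk), C (a (kk + r)) * X 0 ^ r)
        + C (v kk) *
          (X 1 ^ kk + ∑ s ∈ Finset.Ico 1 kk, C (d (m - kk + s)) * X 1 ^ s)) :
    ∃ B : Module.Basis (Fin m) ℂ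
        (MvPolynomial (Fin 2) ℂ ⧸
          (Ideal.span ({X 0 * X 1 - C t} ∪ {p | ∃ kk ≤ m, p = F kk}) :
            Ideal (MvPolynomial (Fin 2) ℂ))),
      ∀ jj : Fin m, B jj = Ideal.Quotient.mk _
        (if (jj : ℕ) ≤ m - i then X 0 ^ (jj : ℕ) else X 1 ^ ((jj : ℕ) - (m - i))) := by
  have hI : Ideal.span ({X 0 * X 1 - C t} ∪ {p | ∃ kk ≤ m, p = F kk}) =
      NodalHilbertChart.chartIdeal m t a d u v := by
    rw [NodalHilbertChart.chartIdeal]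
    congr 2
    ext p
    refine exists_congr fun k => and_congr_right fun hk => ?_
    rw [NodalHilbertChart.eq_gen_of_formulas (by omega) F hF0 hFm hFk hk]
  rw [hI]
  refine ⟨.mk (NodalHilbertChart.linearIndependent_chartBasis_mk hm hi1 him ht hu hv hC h0 hm0
    hud) (NodalHilbertChart.top_le_chartSpan_mk hi1 him hu hv), fun j => ?_⟩
  rw [Module.Basis.mk_apply, NodalHilbertChart.chartBasis]
  split_ifs <;> simp
end
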